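/- arXiv:0712.3662 — 3 statements merged into one kernel-verified Lean document; each statement's English description precedes it below -/
import Mathlib

section
/- Let A be a cellular algebra over a field with cell datum (Λ, M, C, *). Then the set {D_λ : λ ∈ Λ, D_λ ≠ 0}, where D_λ = S_λ / rad(φ_λ), is a complete set of pairwise non-isomorphic simple A-modules. -/
open Classical

/-- The span of the cellular basis elements `C^μ_{U,V}` with `μ < λ`. -/
def lowerSpan {R A : Type*} [CommRing R] [Ring A] [Algebra R A] {Λ : Type*}
    [PartialOrder Λ] {M : Λ → Type*} (C : ∀ l, M l → M l → A) (l : Λ) : Submodule R A :=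
  Submodule.span R {x | ∃ m, m < l ∧ ∃ U V, x = C m U V}

/-!
Left multiplication by `C^λ_{S,T}` acts on the cell module `S_λ` as `x ↦ φ_λ(e_T, x) e_S`, so
any vector outside the radical generates `S_λ` modulo the radical, and a nonzero `D_λ` is
simple. The elements `C^μ_{X,Y}` annihilate `S_λ` unless `λ ≤ μ`, whereas `C^λ` does not
annihilate a nonzero `D_λ`; comparing annihilators, `D_λ ≅ D_μ` forces `λ = μ`. Finally, for a
simple module `L` pick `λ` minimal such that some `C^λ_{S,T}` does not annihilate `L`, say
`C^λ_{S,T} v ≠ 0`. Then `e_U ↦ C^λ_{U,T} v` is an `A`-linear surjection `S_λ → L` whose kernel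
is the radical.
-/

namespace Cellular

theorem forall_apply_eq_zero_iff_basis {R N ι : Type*} [CommSemiring R] [AddCommMonoid N]
    [Module R N] {B : LinearMap.BilinForm R N} (hBs : B.IsSymm) (e : Module.Basis ι R N)
    (x : N) : (∀ y, B x y = 0) ↔ ∀ i, B (e i) x = 0 := by
  simp only [← hBs.eq x]
  exact ⟨fun h i => h (e i), fun h => LinearMap.congr_fun (e.ext (f₁ := B x) (f₂ := 0) h)⟩

variable {k A Λ : Type*} [Field k] [Ring A] [Algebra k A] {M : Λ → Type*}
  {C : ∀ l, M l → M l → A}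

variable (k) in
def levelSpan (C : ∀ l, M l → M l → A) (Q : Λ → Prop) : Submodule k A :=
  Submodule.span k {x | ∃ m, Q m ∧ ∃ U V, x = C m U V}

theorem C_mem_levelSpan {Q : Λ → Prop} {m : Λ} (hm : Q m) (U V : M m) :
    C m U V ∈ levelSpan k C Q :=
  Submodule.subset_span ⟨m, hm, U, V, rfl⟩

variable {b : Module.Basis ((l : Λ) × (M l × M l)) k A} {st : A →ₗ[k] A}
  (hb : ∀ (l) (S T : M l), b ⟨l, (S, T)⟩ = C l S T)
  (hst_mul : ∀ x y : A, st (x * y) = st y * st x)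
  (hstC : ∀ (l) (S T : M l), st (C l S T) = C l T S)

include hb in
theorem repr_smul_C (c : k) (l : Λ) (S T : M l) : b.repr (c • C l S T) ⟨l, (S, T)⟩ = c := by
  simp [← hb]

include hb in
theorem repr_eq_zero_of_mem_levelSpan {Q : Λ → Prop} {x : A} (hx : x ∈ levelSpan k C Q)
    {l : Λ} (hl : ¬ Q l) (S T : M l) : b.repr x ⟨l, (S, T)⟩ = 0 := by
  suffices levelSpan k C Q ≤ LinearMap.ker (b.coord ⟨l, (S, T)⟩) from this hx
  refine Submodule.span_le.2 ?_
  rintro _ ⟨m, hm, U, V, rfl⟩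
  have hne : (⟨m, (U, V)⟩ : (l : Λ) × (M l × M l)) ≠ ⟨l, (S, T)⟩ :=
    fun h => by obtain rfl : m = l := congrArg Sigma.fst h; exact hl hm
  simp [← hb, hne]

include hstC in
theorem map_mem_levelSpan {Q : Λ → Prop} {x : A} (hx : x ∈ levelSpan k C Q) :
    st x ∈ levelSpan k C Q := by
  suffices levelSpan k C Q ≤ (levelSpan k C Q).comap st from this hx
  refine Submodule.span_le.2 ?_
  rintro _ ⟨m, hm, U, V, rfl⟩
  simpa [hstC] using C_mem_levelSpan hm V U

variable [PartialOrder Λ]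

theorem lowerSpan_le_levelSpan_le (l : Λ) : lowerSpan C l ≤ levelSpan k C (· ≤ l) :=
  Submodule.span_mono fun _ ⟨m, hm, U, V, hx⟩ => ⟨m, hm.le, U, V, hx⟩

include hb in
theorem repr_eq_of_sub_mem_lowerSpan {x y : A} {l : Λ} (h : x - y ∈ lowerSpan (R := k) C l)
    (S T : M l) : b.repr x ⟨l, (S, T)⟩ = b.repr y ⟨l, (S, T)⟩ := by
  have := repr_eq_zero_of_mem_levelSpan hb h (lt_irrefl l) S T
  rwa [map_sub, Finsupp.sub_apply, sub_eq_zero] at this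

include hb in
theorem exists_minimal_level_not_mem_annihilator [WellFoundedLT Λ] (L : Type*) [AddCommGroup L]
    [Module A L] [Nontrivial L] :
    ∃ l, (∃ S T, C l S T ∉ Module.annihilator A L) ∧
      lowerSpan C l ≤ (Module.annihilator A L).restrictScalars k := by
  set Z := {l | ∃ S T, C l S T ∉ Module.annihilator A L}
  have hZ : Z.Nonempty := by
    by_contra hZ
    have htop : (Module.annihilator A L).restrictScalars k = ⊤ := by
      rw [eq_top_iff, ← b.span_eq, Submodule.span_le]
      rintro _ ⟨⟨l, S, T⟩, rfl⟩
      by_contra h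
      exact hZ ⟨l, S, T, by rwa [hb] at h⟩
    rw [Submodule.restrictScalars_eq_top_iff, Module.annihilator_eq_top_iff] at htop
    exact not_subsingleton L htop
  obtain ⟨l, hl, hmin⟩ := wellFounded_lt.has_min Z hZ
  refine ⟨l, hl, Submodule.span_le.2 ?_⟩
  rintro _ ⟨m, hm, U, V, rfl⟩
  by_contra h
  exact hmin m ⟨U, V, h⟩ hm

variable {phi : ∀ l, M l → M l → k}
  (hphi : ∀ (l) (S T U V : M l),
    C l S T * C l U V - phi l T U • C l S V ∈ lowerSpan (R := k) C l)

include hb hstC hst_mul hphi in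
theorem phi_symm (l : Λ) (T U : M l) : phi l T U = phi l U T := by
  have h := map_mem_levelSpan hstC (hphi l T T U U)
  rw [map_sub, hst_mul, map_smul, hstC, hstC, hstC] at h
  have h₁ := repr_eq_of_sub_mem_lowerSpan hb h U T
  have h₂ := repr_eq_of_sub_mem_lowerSpan hb (hphi l U U T T) U T
  rw [repr_smul_C hb] at h₁ h₂
  exact h₁.symm.trans h₂

variable [∀ l, Fintype (M l)] {coeff : A → ∀ l : Λ, M l → M l → k}
  (hcoeff : ∀ (a : A) (l) (S T : M l),
    a * C l S T - ∑ S' : M l, coeff a l S' S • C l S' T ∈ lowerSpan (R := k) C l)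

include hb hcoeff in
theorem coeff_eq_repr (a : A) (l : Λ) (S U V : M l) :
    coeff a l S U = b.repr (a * C l U V) ⟨l, (S, V)⟩ := by
  rw [repr_eq_of_sub_mem_lowerSpan hb (hcoeff a l U V)]
  simp [← hb, Finsupp.single_apply]

include hb hphi hcoeff in
theorem coeff_C (l : Λ) (S T S' U : M l) :
    coeff (C l S T) l S' U = if S' = S then phi l T U else 0 := by
  rw [coeff_eq_repr hb hcoeff _ l S' U U, repr_eq_of_sub_mem_lowerSpan hb (hphi l S T U U)]
  rw [← hb, map_smul, b.repr_self, Finsupp.smul_apply, Finsupp.single_apply]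
  by_cases h : S' = S
  · simp [h]
  · simp [h, Ne.symm h]

include hcoeff in
theorem mul_C_mem_levelSpan_le (a : A) (l : Λ) (S T : M l) :
    a * C l S T ∈ levelSpan k C (· ≤ l) := by
  have hsum : ∑ S' : M l, coeff a l S' S • C l S' T ∈ levelSpan k C (· ≤ l) :=
    Submodule.sum_mem _ fun S' _ =>
      Submodule.smul_mem _ _ (C_mem_levelSpan (Q := (· ≤ l)) le_rfl S' T)
  simpa using Submodule.add_mem _ (lowerSpan_le_levelSpan_le l (hcoeff a l S T)) hsum

include hb hcoeff hstC hst_mul in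
/-- `C^μ_{X,Y} C^m_{U,U} = st (C^m_{U,U} C^μ_{Y,X})` lies in the span of the levels `≤ μ`. -/
theorem coeff_C_eq_zero_of_not_le {m μ : Λ} (h : ¬ m ≤ μ) (X Y : M μ) (S U : M m) :
    coeff (C μ X Y) m S U = 0 := by
  have hmem := map_mem_levelSpan hstC (mul_C_mem_levelSpan_le hcoeff (C m U U) μ Y X)
  rw [hst_mul, hstC, hstC] at hmem
  rw [coeff_eq_repr hb hcoeff _ m S U U]
  exact repr_eq_zero_of_mem_levelSpan hb hmem h S U

variable {l : Λ} {N : Type*} [AddCommGroup N] [Module k N] [Module A N] [IsScalarTower k A N]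
  {e : Module.Basis (M l) k N}
  (hact : ∀ (a : A) (T : M l), a • e T = ∑ S' : M l, coeff a l S' T • e S')
  {B : LinearMap.BilinForm k N} (hB : ∀ T U, B (e T) (e U) = phi l T U)
  {R : Submodule A N} (hR : ∀ x, x ∈ R ↔ ∀ y, B x y = 0)

include hb hphi hcoeff hact hB in
theorem C_smul (S T : M l) (x : N) : C l S T • x = B (e T) x • e S := by
  have : DistribSMul.toLinearMap k N (C l S T) = (B (e T)).smulRight (e S) :=
    e.ext fun U => by simp [hact, coeff_C hb hphi hcoeff, hB]
  exact LinearMap.congr_fun this x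

include hb hcoeff hstC hst_mul hact in
theorem C_mem_annihilator_of_not_le {μ : Λ} (h : ¬ l ≤ μ) (X Y : M μ) :
    C μ X Y ∈ Module.annihilator A N := by
  have : DistribSMul.toLinearMap k N (C μ X Y) = 0 :=
    e.ext fun U => by simp [hact, coeff_C_eq_zero_of_not_le hb hst_mul hstC hcoeff h]
  exact Module.mem_annihilator.2 (LinearMap.congr_fun this)

include hb hphi hcoeff hact hB hR in
theorem isSimpleModule_quotient (hBs : B.IsSymm) [Nontrivial (N ⧸ R)] :
    IsSimpleModule A (N ⧸ R) := by
  rw [isSimpleModule_iff_isCoatom]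
  refine ⟨Submodule.Quotient.nontrivial_iff.1 ‹_›, fun q hq => ?_⟩
  obtain ⟨x, hxq, hxR⟩ := SetLike.exists_of_lt hq
  obtain ⟨T, hT⟩ : ∃ T, B (e T) x ≠ 0 := by
    simpa [hR, forall_apply_eq_zero_iff_basis hBs e] using hxR
  have he : ∀ S, e S ∈ q := fun S => by
    have := q.smul_of_tower_mem (B (e T) x)⁻¹ (q.smul_mem (C l S T) hxq)
    rwa [C_smul hb hphi hcoeff hact hB, smul_smul, inv_mul_cancel₀ hT, one_smul] at this
  refine eq_top_iff.2 fun y _ => ?_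
  rw [← e.sum_repr y]
  exact q.sum_mem fun S _ => q.smul_of_tower_mem _ (he S)

include hb hphi hcoeff hact hB hR in
theorem exists_C_not_mem_annihilator (hBs : B.IsSymm) [Nontrivial (N ⧸ R)] :
    ∃ T, C l T T ∉ Module.annihilator A (N ⧸ R) := by
  obtain ⟨x, hx⟩ :=
    SetLike.exists_not_mem_of_ne_top R (Submodule.Quotient.nontrivial_iff.1 ‹_›)
  obtain ⟨T, hT⟩ : ∃ T, B (e T) x ≠ 0 := by
    simpa [hR, forall_apply_eq_zero_iff_basis hBs e] using hx
  refine ⟨T, fun hann => hT ?_⟩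
  have h := Module.mem_annihilator.1 hann (Submodule.Quotient.mk x)
  rw [← Submodule.Quotient.mk_smul, Submodule.Quotient.mk_eq_zero,
    C_smul hb hphi hcoeff hact hB, hR] at h
  simpa using h x

include hcoeff hact in
theorem constr_smul_sub_mul_mem_lowerSpan (T : M l) (a : A) (x : N) :
    e.constr k (fun U => C l U T) (a • x) - a * e.constr k (fun U => C l U T) x ∈
      lowerSpan (R := k) C l := by
  set f := e.constr k (fun U => C l U T)
  have : (lowerSpan C l).mkQ ∘ₗ
      (f ∘ₗ DistribSMul.toLinearMap k N a - LinearMap.mulLeft k a ∘ₗ f) = 0 := e.ext fun U => by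
    have hU : f (a • e U) = ∑ S', coeff a l S' U • C l S' T := by simp [f, hact]
    simpa [hU, f, sub_eq_zero, Submodule.Quotient.eq, neg_sub] using neg_mem (hcoeff a l U T)
  simpa [sub_eq_zero, Submodule.Quotient.eq] using LinearMap.congr_fun this x

variable {L : Type*} [AddCommGroup L] [Module A L]

include hcoeff hact in
/-- The map `e_U ↦ C^λ_{U,T} v`, which is `A`-linear once the lower levels annihilate `L`. -/
noncomputable def cellLift (T : M l) (v : L)
    (hL : lowerSpan C l ≤ (Module.annihilator A L).restrictScalars k) : N →ₗ[A] L where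
  toFun x := e.constr k (fun U => C l U T) x • v
  map_add' x y := by rw [map_add, add_smul]
  map_smul' a x := by
    have := Module.mem_annihilator.1 (hL (constr_smul_sub_mul_mem_lowerSpan hcoeff hact T a x)) v
    rwa [sub_smul, sub_eq_zero, mul_smul] at this

theorem cellLift_apply (T : M l) (v : L)
    (hL : lowerSpan C l ≤ (Module.annihilator A L).restrictScalars k) (x : N) :
    cellLift hcoeff hact T v hL x = e.constr k (fun U => C l U T) x • v :=
  rfl

theorem cellLift_basis (T : M l) (v : L)
    (hL : lowerSpan C l ≤ (Module.annihilator A L).restrictScalars k) (U : M l) :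
    cellLift hcoeff hact T v hL (e U) = C l U T • v := by
  rw [cellLift_apply, Module.Basis.constr_basis]

include hb hphi hcoeff hact hB hR in
theorem ker_cellLift (hBs : B.IsSymm) [IsSimpleModule A L] {S T : M l} {v : L}
    (hv : C l S T • v ≠ 0) (hL : lowerSpan C l ≤ (Module.annihilator A L).restrictScalars k) :
    LinearMap.ker (cellLift hcoeff hact T v hL) = R := by
  set θ := cellLift hcoeff hact T v hL
  have hθ : ∀ T' x, C l S T' • θ x = algebraMap k A (B (e T') x) • C l S T • v := by
    intro T' x
    rw [← map_smul, C_smul hb hphi hcoeff hact hB, ← algebraMap_smul A, map_smul,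
      cellLift_basis]
  apply le_antisymm
  · intro x hx
    rw [hR, forall_apply_eq_zero_iff_basis hBs e]
    intro T'
    by_contra hne
    have h := hθ T' x
    rw [LinearMap.mem_ker.1 hx, smul_zero, eq_comm, ((Ne.isUnit hne).map _).smul_eq_zero] at h
    exact hv h
  -- `θ R` is a submodule annihilated by every `C^λ_{S,T'}`, so it cannot be all of `L`.
  · rcases eq_bot_or_eq_top (R.map θ) with h | h
    · exact Submodule.map_le_iff_le_comap.1 h.le
    · obtain ⟨r, hr, hrv⟩ := Submodule.mem_map.1 (h ▸ Submodule.mem_top : v ∈ R.map θ)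
      rw [hR, forall_apply_eq_zero_iff_basis hBs e] at hr
      exact (hv (by rw [← hrv, hθ, hr, map_zero, zero_smul])).elim

include hb hphi hcoeff hact hB hR in
theorem nonempty_linearEquiv_quotient (hBs : B.IsSymm) [IsSimpleModule A L] {S T : M l} {v : L}
    (hv : C l S T • v ≠ 0) (hL : lowerSpan C l ≤ (Module.annihilator A L).restrictScalars k) :
    Nonempty (L ≃ₗ[A] (N ⧸ R)) := by
  set θ := cellLift hcoeff hact T v hL
  have hsurj : Function.Surjective θ := by
    rw [← LinearMap.range_eq_top]
    refine (eq_bot_or_eq_top _).resolve_left fun h => hv ?_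
    rw [← cellLift_basis hcoeff hact T v hL S]
    exact (Submodule.mem_bot A).1 (h ▸ LinearMap.mem_range_self θ (e S))
  exact ⟨(θ.quotKerEquivOfSurjective hsurj).symm.trans
    (Submodule.quotEquivOfEq _ _ (ker_cellLift hb hphi hcoeff hact hB hR hBs hv hL))⟩

end Cellular

open Cellular

theorem cellular_simple_modules_classification_general
    {k A Λ : Type*} [Field k] [Ring A] [Algebra k A] [PartialOrder Λ] [Fintype Λ]
    {M : Λ → Type*} [∀ l, Fintype (M l)]
    (C : ∀ l, M l → M l → A)
    (b : Module.Basis ((l : Λ) × (M l × M l)) k A)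
    (hb : ∀ (l) (S T : M l), b ⟨l, (S, T)⟩ = C l S T)
    (st : A →ₗ[k] A)
    (hst_mul : ∀ x y : A, st (x * y) = st y * st x)
    (hstC : ∀ (l) (S T : M l), st (C l S T) = C l T S)
    (coeff : A → ∀ l : Λ, M l → M l → k)
    (hcoeff : ∀ (a : A) (l) (S T : M l),
      a * C l S T - ∑ S' : M l, coeff a l S' S • C l S' T ∈ lowerSpan (R := k) C l)
    (phi : ∀ l, M l → M l → k)
    (hphi : ∀ (l) (S T U V : M l),
      C l S T * C l U V - algebraMap k A (phi l T U) * C l S V ∈ lowerSpan (R := k) C l)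
    (Sm : Λ → Type*) [∀ l, AddCommGroup (Sm l)] [∀ l, Module k (Sm l)]
    [∀ l, Module A (Sm l)] [∀ l, IsScalarTower k A (Sm l)]
    (bS : ∀ l, Module.Basis (M l) k (Sm l))
    (haction : ∀ (a : A) (l) (T : M l),
      a • bS l T = ∑ S' : M l, coeff a l S' T • bS l S')
    (Φ : ∀ l, Sm l → Sm l → k)
    (hΦ : ∀ (l) (x y : Sm l), Φ l x y = ∑ T : M l, ∑ U : M l,
      (bS l).repr x T * phi l T U * (bS l).repr y U)
    (rad : ∀ l, Submodule A (Sm l))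
    (hrad : ∀ (l) (x : Sm l), x ∈ rad l ↔ ∀ y : Sm l, Φ l x y = 0) :
    -- each nonzero `D_λ` is simple
    (∀ l : Λ, Nontrivial (Sm l ⧸ rad l) → IsSimpleModule A (Sm l ⧸ rad l)) ∧
    -- they are pairwise non-isomorphic
    (∀ l m : Λ, Nontrivial (Sm l ⧸ rad l) → Nontrivial (Sm m ⧸ rad m) →
      Nonempty ((Sm l ⧸ rad l) ≃ₗ[A] (Sm m ⧸ rad m)) → l = m) ∧
    -- every simple `A`-module is isomorphic to some nonzero `D_λ`
    (∀ (L : Type*) [AddCommGroup L] [Module A L], IsSimpleModule A L →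
      ∃ l : Λ, Nontrivial (Sm l ⧸ rad l) ∧ Nonempty (L ≃ₗ[A] (Sm l ⧸ rad l))) := by
  simp_rw [← Algebra.smul_def] at hphi
  set B : ∀ l, LinearMap.BilinForm k (Sm l) := fun l => Matrix.toBilin (bS l) (Matrix.of (phi l))
  have hB : ∀ l T U, B l (bS l T) (bS l U) = phi l T U := fun l T U => by
    simp [B, Finsupp.single_apply]
  have hBs : ∀ l, (B l).IsSymm := fun l => (Matrix.isSymm_toBilin_iff_isSymm _).2
    (Matrix.IsSymm.ext fun T U => phi_symm hb hst_mul hstC hphi l U T)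
  have hR : ∀ l x, x ∈ rad l ↔ ∀ y, B l x y = 0 := by simpa [B, hΦ] using hrad
  have level_le : ∀ l m, Nontrivial (Sm l ⧸ rad l) →
      ((Sm l ⧸ rad l) ≃ₗ[A] (Sm m ⧸ rad m)) → m ≤ l := by
    intro l m _ e
    obtain ⟨T, hT⟩ :=
      exists_C_not_mem_annihilator hb hphi hcoeff (haction · l) (hB l) (hR l) (hBs l)
    by_contra hml
    refine hT (e.annihilator_eq ▸ (rad m).mkQ.annihilator_le_of_surjective
      (rad m).mkQ_surjective ?_)
    exact C_mem_annihilator_of_not_le hb hst_mul hstC hcoeff (haction · m) hml T T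
  refine ⟨fun l _ => isSimpleModule_quotient hb hphi hcoeff (haction · l) (hB l) (hR l) (hBs l),
    fun l m hl hm ⟨e⟩ => le_antisymm (level_le m l hm e.symm) (level_le l m hl e), ?_⟩
  intro L _ _ hL
  have := IsSimpleModule.nontrivial A L
  obtain ⟨l, ⟨S, T, hST⟩, hlow⟩ := exists_minimal_level_not_mem_annihilator hb L
  obtain ⟨v, hv⟩ : ∃ v : L, C l S T • v ≠ 0 := by simpa [Module.mem_annihilator] using hST
  obtain ⟨e⟩ :=
    nonempty_linearEquiv_quotient hb hphi hcoeff (haction · l) (hB l) (hR l) (hBs l) hv hlow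
  exact ⟨l, e.symm.toEquiv.nontrivial, ⟨e⟩⟩

/-- Let `A` be a cellular algebra over a field `k` with cell datum
`(Λ, M, C, *)` (with `Λ` finite), cell modules `S_λ` with bilinear forms `φ_λ`.  Then
`{D_λ = S_λ / rad(φ_λ) : λ ∈ Λ, D_λ ≠ 0}` is a complete set of pairwise non-isomorphic
simple `A`-modules. -/
theorem cellular_simple_modules_classification
    {k A Λ : Type*} [Field k] [Ring A] [Algebra k A] [PartialOrder Λ] [Fintype Λ]
    {M : Λ → Type*} [∀ l, Fintype (M l)]
    (C : ∀ l, M l → M l → A)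
    (b : Module.Basis ((l : Λ) × (M l × M l)) k A)
    (hb : ∀ (l) (S T : M l), b ⟨l, (S, T)⟩ = C l S T)
    (st : A →ₗ[k] A)
    (hst_mul : ∀ x y : A, st (x * y) = st y * st x)
    (hst_inv : ∀ x : A, st (st x) = x)
    (hstC : ∀ (l) (S T : M l), st (C l S T) = C l T S)
    (coeff : A → ∀ l : Λ, M l → M l → k)
    (hcoeff : ∀ (a : A) (l) (S T : M l),
      a * C l S T - ∑ S' : M l, coeff a l S' S • C l S' T ∈ lowerSpan (R := k) C l)
    (phi : ∀ l, M l → M l → k)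
    (hphi : ∀ (l) (S T U V : M l),
      C l S T * C l U V - algebraMap k A (phi l T U) * C l S V ∈ lowerSpan (R := k) C l)
    (Sm : Λ → Type*) [∀ l, AddCommGroup (Sm l)] [∀ l, Module k (Sm l)]
    [∀ l, Module A (Sm l)] [∀ l, IsScalarTower k A (Sm l)]
    (bS : ∀ l, Module.Basis (M l) k (Sm l))
    (haction : ∀ (a : A) (l) (T : M l),
      a • bS l T = ∑ S' : M l, coeff a l S' T • bS l S')
    (Φ : ∀ l, Sm l → Sm l → k)
    (hΦ : ∀ (l) (x y : Sm l), Φ l x y = ∑ T : M l, ∑ U : M l,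
      (bS l).repr x T * phi l T U * (bS l).repr y U)
    (rad : ∀ l, Submodule A (Sm l))
    (hrad : ∀ (l) (x : Sm l), x ∈ rad l ↔ ∀ y : Sm l, Φ l x y = 0) :
    -- each nonzero `D_λ` is simple
    (∀ l : Λ, Nontrivial (Sm l ⧸ rad l) → IsSimpleModule A (Sm l ⧸ rad l)) ∧
    -- they are pairwise non-isomorphic
    (∀ l m : Λ, Nontrivial (Sm l ⧸ rad l) → Nontrivial (Sm m ⧸ rad m) →
      Nonempty ((Sm l ⧸ rad l) ≃ₗ[A] (Sm m ⧸ rad m)) → l = m) ∧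
    -- every simple `A`-module is isomorphic to some nonzero `D_λ`
    (∀ (L : Type*) [AddCommGroup L] [Module A L], IsSimpleModule A L →
      ∃ l : Λ, Nontrivial (Sm l ⧸ rad l) ∧ Nonempty (L ≃ₗ[A] (Sm l ⧸ rad l))) :=
  cellular_simple_modules_classification_general C b hb st hst_mul hstC coeff hcoeff phi hphi Sm bS
    haction Φ hΦ rad hrad
end

section
/- Let O be a discrete valuation ring with maximal ideal p, S a finitely generated free O-module with a symmetric bilinear form φ : S × S → O, and for i ≥ 0 define S(i) = {x ∈ S : φ(x,y) ∈ p^i for all y ∈ S}. If φ becomes nondegenerate over the fraction field of O, then there exists m_0 with S(m_0) ⊆ pS, and the images kS(i) = (S(i) + pS)/pS form a decreasing filtration of kS = S/pS with kS(0) = kS and kS(1) = rad(kφ), where kφ is the induced form on S/pS. -/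
/-- The Jantzen submodule `S(i) = {x ∈ S : φ(x,y) ∈ P^i for all y}`. -/
def jantzenSub {O : Type*} [CommRing O] {S : Type*} [AddCommGroup S] [Module O S]
    (P : Ideal O) (φ : S →ₗ[O] S →ₗ[O] O) (i : ℕ) : Submodule O S where
  carrier := {x | ∀ y : S, φ x y ∈ P ^ i}
  add_mem' := by
    intro a b ha hb y
    rw [map_add, LinearMap.add_apply]
    exact Ideal.add_mem _ (ha y) (hb y)
  zero_mem' := by intro y; simp
  smul_mem' := by
    intro r x hx y
    rw [map_smul, LinearMap.smul_apply, smul_eq_mul]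
    exact Ideal.mul_mem_left _ r (hx y)

/-!
Let `A` be the Gram matrix of `φ` in a basis of `S`. Separation of `φ` means `det A ≠ 0`, and
Cramer's rule `c ᵥ* A ᵥ* adj A = det A • c` shows that `det A` times each coordinate of an
element of `S(n)` lies in `p^n`. By Krull's intersection theorem `det A ∉ p^n` for some `n`, so
for that `n` no coordinate of an element of `S(n)` is a unit: `S(n) ⊆ pS`. The filtration
statements are formal, using `pS ⊆ S(1)`.
-/

open IsLocalRing Matrix

section
variable {R M : Type*} [CommRing R] [AddCommGroup M] [Module R M] (I : Ideal R)
  (φ : M →ₗ[R] M →ₗ[R] R)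

theorem jantzenSub_antitone : Antitone (jantzenSub I φ) :=
  fun _ _ hij _ hx y => Ideal.pow_le_pow_right hij (hx y)

@[simp]
theorem jantzenSub_zero : jantzenSub I φ 0 = ⊤ :=
  eq_top_iff.2 fun x _ y => by simp

theorem smul_top_le_jantzenSub_one : I • ⊤ ≤ jantzenSub I φ 1 :=
  Submodule.smul_le.2 fun r hr x _ y => by
    simpa [pow_one] using Ideal.mul_mem_right _ _ hr

theorem mkQ_mem_map_jantzenSub_one_iff (x : M) :
    (I • ⊤ : Submodule R M).mkQ x ∈ (jantzenSub I φ 1).map (I • ⊤ : Submodule R M).mkQ ↔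
      ∀ y, φ x y ∈ I := by
  rw [← Submodule.mem_comap, Submodule.comap_map_mkQ,
    sup_eq_right.2 (smul_top_le_jantzenSub_one I φ)]
  simp only [jantzenSub, pow_one]
  rfl

theorem vecMul_repr_toMatrix₂ {ι : Type*} [Fintype ι] [DecidableEq ι] (b : Module.Basis ι R M)
    (x : M) (j : ι) : (b.repr x ᵥ* LinearMap.toMatrix₂ b b φ) j = φ x (b j) := by
  conv_rhs => rw [← b.sum_repr x]
  simp [vecMul, dotProduct, LinearMap.toMatrix₂_apply, -Module.Basis.sum_repr]

theorem det_toMatrix₂_mul_repr_mem {ι : Type*} [Fintype ι] [DecidableEq ι]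
    (b : Module.Basis ι R M) {n : ℕ} {x : M} (hx : x ∈ jantzenSub I φ n) (i : ι) :
    (LinearMap.toMatrix₂ b b φ).det * b.repr x i ∈ I ^ n := by
  set A := LinearMap.toMatrix₂ b b φ
  have cramer : b.repr x ᵥ* A ᵥ* A.adjugate = A.det • ⇑(b.repr x) := by
    rw [vecMul_vecMul, mul_adjugate, vecMul_smul, vecMul_one]
  rw [← smul_eq_mul, ← Pi.smul_apply, ← cramer, vecMul, dotProduct]
  exact Ideal.sum_mem _ fun j _ =>
    Ideal.mul_mem_right _ _ (vecMul_repr_toMatrix₂ φ b x j ▸ hx (b j))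

end

theorem IsLocalRing.exists_mem_maximalIdeal_of_mul_mem_pow {R : Type*} [CommRing R]
    [IsNoetherianRing R] [IsLocalRing R] {a : R} (ha : a ≠ 0) :
    ∃ n, ∀ c, a * c ∈ maximalIdeal R ^ n → c ∈ maximalIdeal R := by
  obtain ⟨n, hn⟩ : ∃ n, a ∉ maximalIdeal R ^ n := by
    by_contra! h
    have krull := Ideal.iInf_pow_eq_bot_of_isLocalRing _ (maximalIdeal.isMaximal R).ne_top
    exact ha <| Ideal.mem_bot.1 <| krull ▸ Ideal.mem_iInf.2 h
  refine ⟨n, fun c hc => by_contra fun hc' => hn ?_⟩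
  obtain ⟨u, rfl⟩ := notMem_maximalIdeal.1 hc'
  simpa using Ideal.mul_mem_right (↑u⁻¹) _ hc

theorem exists_jantzenSub_le_maximalIdeal_smul_top {R M : Type*} [CommRing R] [IsDomain R]
    [IsNoetherianRing R] [IsLocalRing R] [AddCommGroup M] [Module R M] [Module.Free R M]
    [Module.Finite R M] {φ : M →ₗ[R] M →ₗ[R] R} (hφ : φ.SeparatingLeft) :
    ∃ n, jantzenSub (maximalIdeal R) φ n ≤ maximalIdeal R • ⊤ := by
  classical
  let b := Module.Free.chooseBasis R M
  obtain ⟨n, hn⟩ :=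
    exists_mem_maximalIdeal_of_mul_mem_pow ((LinearMap.separatingLeft_iff_det_ne_zero b).1 hφ)
  refine ⟨n, fun x hx => ?_⟩
  rw [← b.sum_repr x]
  exact Submodule.sum_mem _ fun i _ =>
    Submodule.smul_mem_smul (hn _ (det_toMatrix₂_mul_repr_mem _ φ b hx i)) Submodule.mem_top

theorem jantzen_filtration_general {O : Type*} [CommRing O] [IsDomain O] [IsDiscreteValuationRing O]
    {S : Type*} [AddCommGroup S] [Module O S] [Module.Free O S] [Module.Finite O S]
    (φ : S →ₗ[O] S →ₗ[O] O)
    (hnd : ∀ x : S, (∀ y : S, φ x y = 0) → x = 0) :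
    (∃ m₀ : ℕ, jantzenSub (IsLocalRing.maximalIdeal O) φ m₀ ≤
        (IsLocalRing.maximalIdeal O) • (⊤ : Submodule O S)) ∧
    (∀ i : ℕ,
      Submodule.map (Submodule.mkQ ((IsLocalRing.maximalIdeal O) • (⊤ : Submodule O S)))
          (jantzenSub (IsLocalRing.maximalIdeal O) φ (i + 1)) ≤
        Submodule.map (Submodule.mkQ ((IsLocalRing.maximalIdeal O) • (⊤ : Submodule O S)))
          (jantzenSub (IsLocalRing.maximalIdeal O) φ i)) ∧
    (Submodule.map (Submodule.mkQ ((IsLocalRing.maximalIdeal O) • (⊤ : Submodule O S)))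
        (jantzenSub (IsLocalRing.maximalIdeal O) φ 0) = ⊤) ∧
    (∀ x : S,
      Submodule.mkQ ((IsLocalRing.maximalIdeal O) • (⊤ : Submodule O S)) x ∈
        Submodule.map (Submodule.mkQ ((IsLocalRing.maximalIdeal O) • (⊤ : Submodule O S)))
          (jantzenSub (IsLocalRing.maximalIdeal O) φ 1) ↔
      ∀ y : S, φ x y ∈ IsLocalRing.maximalIdeal O) :=
  ⟨exists_jantzenSub_le_maximalIdeal_smul_top hnd,
    fun i => Submodule.map_mono (jantzenSub_antitone _ φ i.le_succ),
    by rw [jantzenSub_zero, Submodule.map_top, Submodule.range_mkQ],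
    mkQ_mem_map_jantzenSub_one_iff _ φ⟩

/-- Let `O` be a discrete valuation ring with maximal ideal `p`, `S` a
finitely generated free `O`-module with a symmetric bilinear form `φ : S × S → O`, and
`S(i) = {x : φ(x,y) ∈ p^i ∀y}`.  If `φ` is nondegenerate over the fraction field of `O`
(equivalently, its kernel over `O` is trivial), then there is `m₀` with `S(m₀) ⊆ pS`,
and the images `kS(i) = (S(i) + pS)/pS` form a decreasing filtration of `kS = S/pS` with
`kS(0) = kS` and `kS(1) = rad(kφ)` (the image of `x` lies in `kS(1)` iff
`kφ(x̄, ·) = 0`, i.e. iff `φ(x,y) ∈ p` for all `y`). -/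
theorem jantzen_filtration {O : Type*} [CommRing O] [IsDomain O] [IsDiscreteValuationRing O]
    {S : Type*} [AddCommGroup S] [Module O S] [Module.Free O S] [Module.Finite O S]
    (φ : S →ₗ[O] S →ₗ[O] O) (hsymm : ∀ x y : S, φ x y = φ y x)
    (hnd : ∀ x : S, (∀ y : S, φ x y = 0) → x = 0) :
    (∃ m₀ : ℕ, jantzenSub (IsLocalRing.maximalIdeal O) φ m₀ ≤
        (IsLocalRing.maximalIdeal O) • (⊤ : Submodule O S)) ∧
    (∀ i : ℕ,
      Submodule.map (Submodule.mkQ ((IsLocalRing.maximalIdeal O) • (⊤ : Submodule O S)))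
          (jantzenSub (IsLocalRing.maximalIdeal O) φ (i + 1)) ≤
        Submodule.map (Submodule.mkQ ((IsLocalRing.maximalIdeal O) • (⊤ : Submodule O S)))
          (jantzenSub (IsLocalRing.maximalIdeal O) φ i)) ∧
    (Submodule.map (Submodule.mkQ ((IsLocalRing.maximalIdeal O) • (⊤ : Submodule O S)))
        (jantzenSub (IsLocalRing.maximalIdeal O) φ 0) = ⊤) ∧
    (∀ x : S,
      Submodule.mkQ ((IsLocalRing.maximalIdeal O) • (⊤ : Submodule O S)) x ∈
        Submodule.map (Submodule.mkQ ((IsLocalRing.maximalIdeal O) • (⊤ : Submodule O S)))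
          (jantzenSub (IsLocalRing.maximalIdeal O) φ 1) ↔
      ∀ y : S, φ x y ∈ IsLocalRing.maximalIdeal O) :=
  jantzen_filtration_general φ hnd
end

section
/- Suppose an algebra H over a field k has two complete sets of pairwise non-isomorphic simple modules {D¹_μ : μ ∈ B¹} and {D²_ν : ν ∈ B²}, and a family of H-modules {S_λ : λ ∈ B} with B¹, B² ⊆ B, such that: for partial orders ≤₁, ≤₂ on B, [S_λ : D¹_μ] ≠ 0 implies μ ≤₁ λ with [S_μ : D¹_μ] = 1 (and similarly for D², ≤₂), and there is a bijection γ : B¹ → B² with [S_λ : D¹_μ] = [S_λ : D²_{γ(μ)}] for all λ, μ. Then the bijection c : B¹ → B² determined by D¹_μ ≅ D²_{c(μ)} equals γ. -/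
theorem eq_of_triangular_column_eq {B M : Type*} [Zero M] {S : Set B} (le : B → B → Prop)
    [Std.Antisymm le] (m : B → S → M) (htri : ∀ (l : B) (ν : S), m l ν ≠ 0 → le (ν : B) l)
    (hdiag : ∀ ν : S, m (ν : B) ν ≠ 0) {ν ν' : S} (h : ∀ l, m l ν = m l ν') : ν = ν' :=
  Subtype.ext <| antisymm (htri _ ν (h ν' ▸ hdiag ν')) (htri _ ν' (h ν ▸ hdiag ν))

theorem matching_bijection_eq_general {H : Type*} [Ring H]
    {B : Type*} {B1 B2 : Set B} (le2 : B → B → Prop)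
    (hle2 : IsPartialOrder B le2)
    (D1 : B1 → Type*) [∀ m, AddCommGroup (D1 m)] [∀ m, Module H (D1 m)]
    (D2 : B2 → Type*) [∀ m, AddCommGroup (D2 m)] [∀ m, Module H (D2 m)]
    -- `m1 l μ = [S_l : D¹_μ]`, `m2 l ν = [S_l : D²_ν]`; multiplicity only depends on the
    -- isomorphism class of the simple module
    (m1 : B → B1 → ℕ) (m2 : B → B2 → ℕ)
    (hmult_iso : ∀ (l : B) (μ : B1) (ν : B2),
      Nonempty (D1 μ ≃ₗ[H] D2 ν) → m1 l μ = m2 l ν)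
    -- unitriangularity of the decomposition numbers
    (htri2 : ∀ (l : B) (ν : B2), m2 l ν ≠ 0 → le2 (ν : B) l)
    (hdiag2 : ∀ ν : B2, m2 (ν : B) ν = 1)
    -- the bijection matching the decomposition numbers
    (γ : B1 → B2)
    (hγ : ∀ (l : B) (μ : B1), m1 l μ = m2 l (γ μ))
    -- the bijection matching isomorphism classes of simple modules
    (c : B1 → B2) (hc : ∀ μ : B1, Nonempty (D1 μ ≃ₗ[H] D2 (c μ))) :
    c = γ := by
  funext μ
  have hcol : ∀ l, m2 l (c μ) = m2 l (γ μ) := fun l =>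
    (hmult_iso l μ (c μ) (hc μ)).symm.trans (hγ l μ)
  exact eq_of_triangular_column_eq le2 m2 htri2 (fun ν => (hdiag2 ν).symm ▸ one_ne_zero) hcol

/-- Suppose an algebra `H` over a field `k` has two complete sets of
pairwise non-isomorphic simple modules `{D¹_μ : μ ∈ B¹}` and `{D²_ν : ν ∈ B²}`, and a
family of `H`-modules `{S_λ : λ ∈ B}` with `B¹, B² ⊆ B`, such that for partial orders
`≤₁, ≤₂` on `B` the multiplicities `[S_λ : D¹_μ]` (encoded by a function `m1`, and `m2`
for `D²`, invariant under isomorphism of the simple module) satisfy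
`[S_λ : D¹_μ] ≠ 0 → μ ≤₁ λ` and `[S_μ : D¹_μ] = 1` (similarly for `D²`, `≤₂`), and
there is a bijection `γ : B¹ → B²` with `[S_λ : D¹_μ] = [S_λ : D²_{γ(μ)}]` for all
`λ, μ`.  Then the bijection `c : B¹ → B²` determined by `D¹_μ ≅ D²_{c(μ)}` equals `γ`. -/
theorem matching_bijection_eq {k H : Type*} [Field k] [Ring H] [Algebra k H]
    {B : Type*} {B1 B2 : Set B} (le1 le2 : B → B → Prop)
    (hle1 : IsPartialOrder B le1) (hle2 : IsPartialOrder B le2)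
    (Sm : B → Type*) [∀ l, AddCommGroup (Sm l)] [∀ l, Module H (Sm l)]
    (D1 : B1 → Type*) [∀ m, AddCommGroup (D1 m)] [∀ m, Module H (D1 m)]
    (D2 : B2 → Type*) [∀ m, AddCommGroup (D2 m)] [∀ m, Module H (D2 m)]
    (hD1simple : ∀ m, IsSimpleModule H (D1 m))
    (hD2simple : ∀ m, IsSimpleModule H (D2 m))
    (hD1pair : ∀ m m', Nonempty (D1 m ≃ₗ[H] D1 m') → m = m')
    (hD2pair : ∀ m m', Nonempty (D2 m ≃ₗ[H] D2 m') → m = m')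
    (hD1complete : ∀ (L : Type*) [AddCommGroup L] [Module H L],
      IsSimpleModule H L → ∃ m, Nonempty (L ≃ₗ[H] D1 m))
    (hD2complete : ∀ (L : Type*) [AddCommGroup L] [Module H L],
      IsSimpleModule H L → ∃ m, Nonempty (L ≃ₗ[H] D2 m))
    -- `m1 l μ = [S_l : D¹_μ]`, `m2 l ν = [S_l : D²_ν]`; multiplicity only depends on the
    -- isomorphism class of the simple module
    (m1 : B → B1 → ℕ) (m2 : B → B2 → ℕ)
    (hmult_iso : ∀ (l : B) (μ : B1) (ν : B2),
      Nonempty (D1 μ ≃ₗ[H] D2 ν) → m1 l μ = m2 l ν)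
    -- unitriangularity of the decomposition numbers
    (htri1 : ∀ (l : B) (μ : B1), m1 l μ ≠ 0 → le1 (μ : B) l)
    (hdiag1 : ∀ μ : B1, m1 (μ : B) μ = 1)
    (htri2 : ∀ (l : B) (ν : B2), m2 l ν ≠ 0 → le2 (ν : B) l)
    (hdiag2 : ∀ ν : B2, m2 (ν : B) ν = 1)
    -- the bijection matching the decomposition numbers
    (γ : B1 → B2) (hγbij : Function.Bijective γ)
    (hγ : ∀ (l : B) (μ : B1), m1 l μ = m2 l (γ μ))
    -- the bijection matching isomorphism classes of simple modules
    (c : B1 → B2) (hc : ∀ μ : B1, Nonempty (D1 μ ≃ₗ[H] D2 (c μ))) :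
    c = γ :=
  matching_bijection_eq_general le2 hle2 D1 D2 m1 m2 hmult_iso htri2 hdiag2 γ hγ c hc
end
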